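/- Let F be an algebraically closed field of characteristic p > 2, m,n,t ≥ 1, λ_i, κ_j ∈ F nonzero with |λ| = λ_1^{p−1} = ⋯ = λ_m^{p−1} = κ_1^{p−1} = ⋯ = κ_n^{p−1}, and μ ∈ F^{2m+2}. In the restricted twisted Heisenberg Lie superalgebra h^{λ,κ,μ}_{m,n,t} on V = L ⊕ W, the subspace span{[x,y] : x,y ∈ V} + span{P(g) : g ∈ L} equals span{e_1,…,e_{2m+2}, ω_1,…,ω_{2n}}. Consequently the restricted first cohomology H¹_* = {F-linear ψ : V → F : ψ([x,y]) = 0 for all x,y ∈ V and ψ(P(g)) = 0 for all g ∈ L} has even part zero and odd part of dimension t, spanned by η^1,…,η^t; that is, sdim H¹_*(h^{λ,κ,μ}_{m,n,t}) = (0, t). -/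

import Mathlib

attribute [local instance 100] LieRing.ofAssociativeRing

/-- In the restricted twisted Heisenberg Lie superalgebra
`h^{λ,κ,μ}_{m,n,t}` on `V = L ⊕ W` (setup as in the paper, 0-indexed; `P` the
`[p]`-operator given by formula (res)), the subspace spanned by all bracket
values together with all `[p]`-th powers `P g` equals
`span{e 0,…,e (2m+1), ω_1,…,ω_{2n}}`.  Consequently the restricted 1-cocycles
have zero even part and odd part the `t`-dimensional span of `η^1,…,η^t`:
`sdim H¹_*(h^{λ,κ,μ}_{m,n,t}) = (0,t)`. -/
theorem stmt_6
    (F : Type*) [Field F] [IsAlgClosed F]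
    (p : ℕ) [Fact (Nat.Prime p)] [CharP F p] (hp2 : 2 < p)
    (m n t : ℕ) (hm : 1 ≤ m) (hn : 1 ≤ n) (ht : 1 ≤ t)
    (lam kap : ℕ → F) (hlam : ∀ i, i < m → lam i ≠ 0) (hkap : ∀ j, j < n → kap j ≠ 0)
    (hlameq : ∀ i, i < m → lam i ^ (p-1) = lam 0 ^ (p-1))
    (hkapeq : ∀ j, j < n → kap j ^ (p-1) = lam 0 ^ (p-1))
    (mu : ℕ → F)
    (L : Type*) [LieRing L] [LieAlgebra F L]
    (b : Module.Basis (Fin (2*m+2)) F L)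
    (e : ℕ → L) (he : ∀ i : Fin (2*m+2), e (i : ℕ) = b i)
    (hbr : ∀ i j : ℕ, i < 2*m+2 → j < 2*m+2 →
      ⁅e i, e j⁆ =
        if i < m ∧ j = m + i then e (2*m)
        else if j < m ∧ i = m + j then - e (2*m)
        else if i = 2*m+1 ∧ j < m then lam j • e (m + j)
        else if i = 2*m+1 ∧ m ≤ j ∧ j < 2*m then lam (j-m) • e (j-m)
        else if j = 2*m+1 ∧ i < m then - (lam i • e (m + i))
        else if j = 2*m+1 ∧ m ≤ i ∧ i < 2*m then - (lam (i-m) • e (i-m))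
        else 0)
    (ρ : L →ₗ⁅F⁆ Module.End F (Fin (2*n+t) → F))
    (hρ0 : ∀ i, i < 2*m+1 → ρ (e i) = 0)
    (hρ1 : ∀ (v : Fin (2*n+t) → F) (i : Fin (2*n+t)),
      ρ (e (2*m+1)) v i =
        if h1 : (i : ℕ) < n then kap i * v ⟨(i : ℕ) + n, by omega⟩
        else if h2 : (i : ℕ) < 2*n then
          kap ((i : ℕ) - n) * v ⟨(i : ℕ) - n, by have := i.isLt; omega⟩
        else 0)
    (Br : L × (Fin (2*n+t) → F) → L × (Fin (2*n+t) → F) → L × (Fin (2*n+t) → F))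
    (hBr : ∀ (x y : L) (u v : Fin (2*n+t) → F),
      Br (x, u) (y, v) =
        (⁅x, y⁆ +
          ((∑ j : Fin n, u ⟨(j : ℕ), by have := j.isLt; omega⟩
              * v ⟨(j : ℕ), by have := j.isLt; omega⟩)
           - (∑ j : Fin n, u ⟨n + (j : ℕ), by have := j.isLt; omega⟩
              * v ⟨n + (j : ℕ), by have := j.isLt; omega⟩)
           + (∑ k : Fin t, u ⟨2*n + (k : ℕ), by have := k.isLt; omega⟩
              * v ⟨2*n + (k : ℕ), by have := k.isLt; omega⟩)) • e (2*m),
         ρ x v - ρ y u))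
    (P : L → L)
    (hP : ∀ a : ℕ → F,
      P (∑ i ∈ Finset.range (2*m+2), a i • e i) =
        (a (2*m+1) ^ (p-1) * lam 0 ^ (p-1)) • (∑ i ∈ Finset.range (2*m), a i • e i)
        + (a (2*m+1) ^ p * lam 0 ^ (p-1)) • e (2*m+1)
        + ((∑ i ∈ Finset.range (2*m+2), a i ^ p * mu i)
            + (2 : F)⁻¹ * a (2*m+1) ^ (p-2)
              * (∑ i ∈ Finset.range m, lam i ^ (p-2) * (a i ^ 2 - a (m+i) ^ 2)))
          • e (2*m)) :
    -- span of brackets together with [p]-th powers: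
    (Submodule.span F ({z : L × (Fin (2*n+t) → F) | ∃ x y, z = Br x y}
        ∪ {z : L × (Fin (2*n+t) → F) | ∃ g : L, z = (P g, 0)})
      = Submodule.span F
          ((fun i : ℕ => ((e i, 0) : L × (Fin (2*n+t) → F))) '' {i | i < 2*m+2}
            ∪ (fun j : Fin (2*n+t) =>
                ((0, Pi.single j 1) : L × (Fin (2*n+t) → F))) '' {j | (j : ℕ) < 2*n}))
    -- the even part of H¹_* vanishes:
    ∧ ({ψ : (L × (Fin (2*n+t) → F)) →ₗ[F] F |
          (∀ x y, ψ (Br x y) = 0) ∧ (∀ g : L, ψ (P g, 0) = 0)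
            ∧ ∀ w : Fin (2*n+t) → F, ψ (0, w) = 0}
        = {0})
    -- the odd part of H¹_* is the t-dimensional span of the η^k:
    ∧ ({ψ : (L × (Fin (2*n+t) → F)) →ₗ[F] F |
          (∀ x y, ψ (Br x y) = 0) ∧ (∀ g : L, ψ (P g, 0) = 0)
            ∧ ∀ x : L, ψ (x, 0) = 0}
        = ↑(Submodule.span F (Set.range (fun k : Fin t =>
            (LinearMap.proj (R := F) (φ := fun _ : Fin (2*n+t) => F)
                ⟨2*n + (k : ℕ), by have := k.isLt; omega⟩).comp
              (LinearMap.snd F L (Fin (2*n+t) → F))))))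
    ∧ LinearIndependent F (fun k : Fin t =>
        (LinearMap.proj (R := F) (φ := fun _ : Fin (2*n+t) => F)
            ⟨2*n + (k : ℕ), by have := k.isLt; omega⟩).comp
          (LinearMap.snd F L (Fin (2*n+t) → F))) := by
 classical
  have hp0 : p ≠ 0 := (Fact.out : p.Prime).ne_zero
  have hlam0 : lam 0 ≠ 0 := hlam 0 hm
  have hlp : lam 0 ^ (p-1) ≠ 0 := pow_ne_zero _ hlam0
  set Tset : Set (L × (Fin (2*n+t) → F)) :=
      ((fun i : ℕ => ((e i, 0) : L × (Fin (2*n+t) → F))) '' {i | i < 2*m+2}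
        ∪ (fun j : Fin (2*n+t) =>
            ((0, Pi.single j 1) : L × (Fin (2*n+t) → F))) '' {j | (j : ℕ) < 2*n}) with hTdef
  set Sset : Set (L × (Fin (2*n+t) → F)) :=
      ({z : L × (Fin (2*n+t) → F) | ∃ x y, z = Br x y}
        ∪ {z : L × (Fin (2*n+t) → F) | ∃ g : L, z = (P g, 0)}) with hSdef
  -- decomposition of a vector over the single's
  have hpsum : ∀ w : Fin (2*n+t) → F,
      ((0 : L), w) = ∑ j : Fin (2*n+t), w j •
        (((0 : L), Pi.single j 1) : L × (Fin (2*n+t) → F)) := by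
    intro w
    have h2 : ∑ j : Fin (2*n+t), w j • (Pi.single j 1 : Fin (2*n+t) → F) = w := by
      funext i
      rw [Finset.sum_apply]
      simp [Pi.single_apply]
    apply Prod.ext
    · simp [Prod.fst_sum]
    · rw [Prod.snd_sum]
      simp only [Prod.smul_mk]
      exact h2.symm
  -- all (x, 0) lie in span Tset
  have hxT : ∀ x : L, ((x, 0) : L × (Fin (2*n+t) → F)) ∈ Submodule.span F Tset := by
    intro x
    have h1 : x ∈ Submodule.span F (Set.range b) := by rw [b.span_eq]; exact Submodule.mem_top
    have h2 := Submodule.mem_map_of_mem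
      (f := LinearMap.inl F L (Fin (2*n+t) → F)) h1
    rw [Submodule.map_span] at h2
    refine Submodule.span_mono ?_ h2
    rintro z ⟨_, ⟨i, rfl⟩, rfl⟩
    exact Or.inl ⟨(i : ℕ), i.isLt, by simp [he i]⟩
  -- vectors supported on the first 2n coordinates lie in span Tset
  have hwT : ∀ w : Fin (2*n+t) → F, (∀ j : Fin (2*n+t), 2*n ≤ (j : ℕ) → w j = 0) →
      ((0 : L), w) ∈ Submodule.span F Tset := by
    intro w hw
    rw [hpsum w]
    refine Submodule.sum_mem _ fun j _ => ?_
    by_cases hj : (j : ℕ) < 2*n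
    · exact Submodule.smul_mem _ _ (Submodule.subset_span (Or.inr ⟨j, hj, rfl⟩))
    · rw [hw j (le_of_not_gt hj), zero_smul]; exact Submodule.zero_mem _
  have hmemT : ∀ z : L × (Fin (2*n+t) → F),
      (∀ j : Fin (2*n+t), 2*n ≤ (j : ℕ) → z.2 j = 0) → z ∈ Submodule.span F Tset := by
    intro z hz
    have h1 := Submodule.add_mem _ (hxT z.1) (hwT z.2 hz)
    simpa using h1
  -- ρ kills the top t coordinates
  have hρ_high : ∀ (x : L) (v : Fin (2*n+t) → F) (j : Fin (2*n+t)),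
      2*n ≤ (j : ℕ) → ρ x v j = 0 := by
    intro x v j hj
    have hx : ρ x = ∑ i : Fin (2*m+2), b.repr x i • ρ (b i) := by
      conv_lhs => rw [← b.sum_repr x]
      rw [← LieHom.coe_toLinearMap, map_sum]
      simp only [map_smul, LieHom.coe_toLinearMap]
    rw [hx]
    simp only [LinearMap.sum_apply, LinearMap.smul_apply, Finset.sum_apply,
      Pi.smul_apply, smul_eq_mul]
    refine Finset.sum_eq_zero fun i _ => ?_
    rcases lt_or_ge (i : ℕ) (2*m+1) with hi | hi
    · have hz : ρ (b i) = 0 := by rw [← he i]; exact hρ0 _ hi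
      rw [hz]; simp
    · have hi2 : ((i : ℕ) : ℕ) = 2*m+1 := by omega
      have hbi : b i = e (2*m+1) := by rw [← he i, hi2]
      rw [hbi, hρ1, dif_neg (by omega), dif_neg (by omega), mul_zero]
  -- basic bracket values
  have hbr1 : (⁅e 0, e m⁆ : L) = e (2*m) := by
    rw [hbr 0 m (by omega) (by omega), if_pos ⟨hm, by omega⟩]
  have hbr2 : ∀ i, i < m → (⁅e (2*m+1), e (m+i)⁆ : L) = lam i • e i := by
    intro i hi
    rw [hbr _ _ (by omega) (by omega), if_neg (by omega), if_neg (by omega),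
      if_neg (by omega), if_pos ⟨rfl, by omega, by omega⟩,
      Nat.add_sub_cancel_left]
  have hbr3 : ∀ i, m ≤ i → i < 2*m → (⁅e (2*m+1), e (i-m)⁆ : L) = lam (i-m) • e i := by
    intro i h1 h2
    rw [hbr _ _ (by omega) (by omega), if_neg (by omega), if_neg (by omega),
      if_pos ⟨rfl, by omega⟩, show m + (i - m) = i by omega]
  -- brackets of pure elements
  have hBr0 : ∀ x y : L, Br (x, 0) (y, 0) = (⁅x, y⁆, 0) := by
    intro x y
    rw [hBr]
    simp
  have hBrW : ∀ w : Fin (2*n+t) → F,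
      Br (e (2*m+1), 0) ((0 : L), w) = ((0 : L), ρ (e (2*m+1)) w) := by
    intro w
    rw [hBr]
    simp
  -- action of e (2m+1) on the single's
  have hρsA : ∀ jj : Fin (2*n+t), (hjj : (jj : ℕ) < n) →
      ρ (e (2*m+1)) (Pi.single (⟨(jj : ℕ) + n, by omega⟩ : Fin (2*n+t)) 1)
        = kap (jj : ℕ) • (Pi.single jj 1 : Fin (2*n+t) → F) := by
    intro jj hjj
    funext i
    rw [hρ1]
    simp only [Pi.smul_apply, smul_eq_mul, Pi.single_apply]
    by_cases hij : (i : ℕ) = (jj : ℕ)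
    · rw [dif_pos (by omega), if_pos (Fin.ext (show (i : ℕ) + n = (jj : ℕ) + n by omega)),
        if_pos (Fin.ext hij), hij]
    · rw [if_neg (fun hcon => hij (by simpa using congrArg Fin.val hcon)), mul_zero]
      rcases lt_or_ge (i : ℕ) n with h1 | h1
      · rw [dif_pos h1,
          if_neg (fun hcon => by
            have := congrArg Fin.val hcon
            simp only [Fin.val_mk] at this
            omega), mul_zero]
      rcases lt_or_ge (i : ℕ) (2*n) with h2 | h2
      · rw [dif_neg (by omega), dif_pos h2,
          if_neg (fun hcon => by
            have := congrArg Fin.val hcon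
            simp only [Fin.val_mk] at this
            omega), mul_zero]
      · rw [dif_neg (by omega), dif_neg (by omega)]
  have hρsB : ∀ jj : Fin (2*n+t), n ≤ (jj : ℕ) → (jj : ℕ) < 2*n →
      ρ (e (2*m+1)) (Pi.single (⟨(jj : ℕ) - n, by omega⟩ : Fin (2*n+t)) 1)
        = kap ((jj : ℕ) - n) • (Pi.single jj 1 : Fin (2*n+t) → F) := by
    intro jj hj1 hj2
    funext i
    rw [hρ1]
    simp only [Pi.smul_apply, smul_eq_mul, Pi.single_apply]
    by_cases hij : (i : ℕ) = (jj : ℕ)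
    · rw [dif_neg (by omega), dif_pos (by omega),
        if_pos (Fin.ext (show (i : ℕ) - n = (jj : ℕ) - n by omega)),
        if_pos (Fin.ext hij), show (i : ℕ) - n = (jj : ℕ) - n by omega]
    · rw [if_neg (fun hcon => hij (by simpa using congrArg Fin.val hcon)), mul_zero]
      rcases lt_or_ge (i : ℕ) n with h1 | h1
      · rw [dif_pos h1,
          if_neg (fun hcon => by
            have := congrArg Fin.val hcon
            simp only [Fin.val_mk] at this
            omega), mul_zero]
      rcases lt_or_ge (i : ℕ) (2*n) with h2 | h2
      · rw [dif_neg (by omega), dif_pos h2,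
          if_neg (fun hcon => by
            have := congrArg Fin.val hcon
            simp only [Fin.val_mk] at this
            omega), mul_zero]
      · rw [dif_neg (by omega), dif_neg (by omega)]
  -- (e (2m), 0) is a bracket
  have h2mS : ((e (2*m), 0) : L × (Fin (2*n+t) → F)) ∈ Submodule.span F Sset := by
    have h : ((e (2*m), 0) : L × (Fin (2*n+t) → F)) = Br (e 0, 0) (e m, 0) := by
      rw [hBr0, hbr1]
    rw [h]
    exact Submodule.subset_span (Or.inl ⟨_, _, rfl⟩)
  -- the value of P on e (2m+1)
  have hPe : P (e (2*m+1)) = (lam 0 ^ (p-1)) • e (2*m+1) + mu (2*m+1) • e (2*m) := by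
    have ha : (∑ i ∈ Finset.range (2*m+2),
        (if i = 2*m+1 then (1:F) else 0) • e i) = e (2*m+1) := by
      simp only [ite_smul, one_smul, zero_smul]
      rw [Finset.sum_ite_eq' (Finset.range (2*m+2)) (2*m+1) e,
        if_pos (Finset.mem_range.2 (by omega))]
    have hPe0 := hP (fun q => if q = 2*m+1 then (1:F) else 0)
    rw [ha] at hPe0
    have e1 : ∑ i ∈ Finset.range (2*m), (if i = 2*m+1 then (1:F) else 0) • e i = 0 :=
      Finset.sum_eq_zero fun i hi => by
        rw [if_neg (by have := Finset.mem_range.1 hi; omega), zero_smul]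
    have e2 : ∑ i ∈ Finset.range (2*m+2), (if i = 2*m+1 then (1:F) else 0) ^ p * mu i
        = mu (2*m+1) := by
      have hc : ∀ i ∈ Finset.range (2*m+2),
          (if i = 2*m+1 then (1:F) else 0) ^ p * mu i = if i = 2*m+1 then mu i else 0 := by
        intro i _
        by_cases hi : i = 2*m+1
        · rw [if_pos hi, if_pos hi, one_pow, one_mul]
        · rw [if_neg hi, if_neg hi, zero_pow hp0, zero_mul]
      rw [Finset.sum_congr rfl hc, Finset.sum_ite_eq' _ _ mu,
        if_pos (Finset.mem_range.2 (by omega))]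
    have e3 : ∑ i ∈ Finset.range m, lam i ^ (p-2) *
        ((if i = 2*m+1 then (1:F) else 0) ^ 2 - (if m+i = 2*m+1 then (1:F) else 0) ^ 2) = 0 :=
      Finset.sum_eq_zero fun i hi => by
        have him := Finset.mem_range.1 hi
        rw [if_neg (by omega), if_neg (by omega)]
        simp
    rw [e1, e2, e3] at hPe0
    simpa using hPe0
  -- each generator of Tset lies in span Sset
  have heiS : ∀ i : ℕ, i < 2*m+2 →
      ((e i, 0) : L × (Fin (2*n+t) → F)) ∈ Submodule.span F Sset := by
    intro i hi
    by_cases hi1 : i < m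
    · have h1 : ((lam i • e i, 0) : L × (Fin (2*n+t) → F)) ∈ Submodule.span F Sset := by
        have h : ((lam i • e i, 0) : L × (Fin (2*n+t) → F))
            = Br (e (2*m+1), 0) (e (m+i), 0) := by rw [hBr0, hbr2 i hi1]
        rw [h]
        exact Submodule.subset_span (Or.inl ⟨_, _, rfl⟩)
      have h2 := Submodule.smul_mem _ (lam i)⁻¹ h1
      rw [Prod.smul_mk, smul_smul, inv_mul_cancel₀ (hlam i hi1), one_smul, smul_zero] at h2
      exact h2
    by_cases hi2 : i < 2*m
    · have hm1 : m ≤ i := by omega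
      have h1 : ((lam (i-m) • e i, 0) : L × (Fin (2*n+t) → F)) ∈ Submodule.span F Sset := by
        have h : ((lam (i-m) • e i, 0) : L × (Fin (2*n+t) → F))
            = Br (e (2*m+1), 0) (e (i-m), 0) := by rw [hBr0, hbr3 i hm1 hi2]
        rw [h]
        exact Submodule.subset_span (Or.inl ⟨_, _, rfl⟩)
      have h2 := Submodule.smul_mem _ (lam (i-m))⁻¹ h1
      rw [Prod.smul_mk, smul_smul, inv_mul_cancel₀ (hlam (i-m) (by omega)), one_smul,
        smul_zero] at h2
      exact h2
    by_cases hi3 : i = 2*m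
    · rw [hi3]; exact h2mS
    · have hi4 : i = 2*m+1 := by omega
      rw [hi4]
      have hPmem : ((P (e (2*m+1)), 0) : L × (Fin (2*n+t) → F)) ∈ Submodule.span F Sset :=
        Submodule.subset_span (Or.inr ⟨_, rfl⟩)
      have h2 := Submodule.smul_mem _ (lam 0 ^ (p-1))⁻¹
        (Submodule.sub_mem _ hPmem (Submodule.smul_mem _ (mu (2*m+1)) h2mS))
      have h3 : ((lam 0 ^ (p-1))⁻¹ •
          (((P (e (2*m+1)), 0) : L × (Fin (2*n+t) → F)) - mu (2*m+1) • (e (2*m), 0)))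
          = ((e (2*m+1), 0) : L × (Fin (2*n+t) → F)) := by
        rw [hPe, Prod.smul_mk, Prod.mk_sub_mk, Prod.smul_mk]
        rw [add_sub_cancel_right, smul_smul, inv_mul_cancel₀ hlp, one_smul]
        simp
      rw [h3] at h2
      exact h2
  have hωS : ∀ j : Fin (2*n+t), (j : ℕ) < 2*n →
      (((0 : L), Pi.single j 1) : L × (Fin (2*n+t) → F)) ∈ Submodule.span F Sset := by
    intro j hj
    rcases lt_or_ge (j : ℕ) n with h1 | h1
    · have hb : Br (e (2*m+1), 0)
          ((0 : L), Pi.single (⟨(j : ℕ) + n, by omega⟩ : Fin (2*n+t)) 1)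
          = ((0 : L), kap (j : ℕ) • (Pi.single j 1 : Fin (2*n+t) → F)) := by
        rw [hBrW, hρsA j h1]
      have hmem : (((0 : L), kap (j : ℕ) • (Pi.single j 1 : Fin (2*n+t) → F)) : L × (Fin (2*n+t) → F))
          ∈ Submodule.span F Sset := by
        rw [← hb]
        exact Submodule.subset_span (Or.inl ⟨_, _, rfl⟩)
      have h2 := Submodule.smul_mem _ (kap (j : ℕ))⁻¹ hmem
      rw [Prod.smul_mk, smul_zero, smul_smul, inv_mul_cancel₀ (hkap _ h1), one_smul] at h2
      exact h2
    · have hb : Br (e (2*m+1), 0)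
          ((0 : L), Pi.single (⟨(j : ℕ) - n, by omega⟩ : Fin (2*n+t)) 1)
          = ((0 : L), kap ((j : ℕ) - n) • (Pi.single j 1 : Fin (2*n+t) → F)) := by
        rw [hBrW, hρsB j h1 hj]
      have hmem : (((0 : L), kap ((j : ℕ) - n) • (Pi.single j 1 : Fin (2*n+t) → F)) : L × (Fin (2*n+t) → F))
          ∈ Submodule.span F Sset := by
        rw [← hb]
        exact Submodule.subset_span (Or.inl ⟨_, _, rfl⟩)
      have h2 := Submodule.smul_mem _ (kap ((j : ℕ) - n))⁻¹ hmem
      rw [Prod.smul_mk, smul_zero, smul_smul, inv_mul_cancel₀ (hkap _ (by omega)),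
        one_smul] at h2
      exact h2
  -- the span equality
  have hspan : Submodule.span F Sset = Submodule.span F Tset := by
    apply le_antisymm
    · refine Submodule.span_le.2 ?_
      rintro z (⟨x, y, rfl⟩ | ⟨g, rfl⟩)
      · obtain ⟨x1, x2⟩ := x
        obtain ⟨y1, y2⟩ := y
        rw [hBr]
        refine hmemT _ fun j hj => ?_
        show (ρ x1 y2 - ρ y1 x2) j = 0
        rw [Pi.sub_apply, hρ_high _ _ _ hj, hρ_high _ _ _ hj, sub_zero]
      · exact hxT (P g)
    · refine Submodule.span_le.2 ?_
      rintro z (⟨i, hi, rfl⟩ | ⟨j, hj, rfl⟩)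
      · exact heiS i hi
      · exact hωS j hj
  -- linear maps vanishing on Sset vanish on span Tset
  have hker : ∀ ψ : (L × (Fin (2*n+t) → F)) →ₗ[F] F,
      (∀ x y, ψ (Br x y) = 0) → (∀ g : L, ψ (P g, 0) = 0) →
      ∀ z ∈ Submodule.span F Tset, ψ z = 0 := by
    intro ψ h1 h2 z hz
    rw [← hspan] at hz
    have hle : Submodule.span F Sset ≤ LinearMap.ker ψ := by
      refine Submodule.span_le.2 ?_
      rintro w (⟨x, y, rfl⟩ | ⟨g, rfl⟩)
      · exact h1 x y
      · exact h2 g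
    exact hle hz
  have hdec : ∀ (ψ : (L × (Fin (2*n+t) → F)) →ₗ[F] F) (z : L × (Fin (2*n+t) → F)),
      ψ z = ψ (z.1, 0) + ψ (0, z.2) := by
    intro ψ z
    rw [← map_add]
    congr 1
    simp
  refine ⟨hspan, ?_, ?_, ?_⟩
  · -- even part vanishes
    ext ψ
    simp only [Set.mem_setOf_eq, Set.mem_singleton_iff]
    constructor
    · rintro ⟨h1, h2, h3⟩
      apply LinearMap.ext
      intro z
      rw [hdec ψ z, hker ψ h1 h2 _ (hxT z.1), h3 z.2, add_zero, LinearMap.zero_apply]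
    · rintro rfl
      exact ⟨fun _ _ => rfl, fun _ => rfl, fun _ => rfl⟩
  · -- odd part
    ext ψ
    simp only [Set.mem_setOf_eq, SetLike.mem_coe]
    constructor
    · rintro ⟨h1, h2, h3⟩
      have hψ : ψ = ∑ k : Fin t,
          ψ ((0 : L), (Pi.single (⟨2*n + (k : ℕ), by omega⟩ : Fin (2*n+t)) 1 :
              Fin (2*n+t) → F)) •
            ((LinearMap.proj (R := F) (φ := fun _ : Fin (2*n+t) => F)
                ⟨2*n + (k : ℕ), by omega⟩).comp
              (LinearMap.snd F L (Fin (2*n+t) → F))) := by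
        apply LinearMap.ext
        intro z
        have hz : ψ z = ψ (0, z.2) := by
          rw [hdec ψ z, h3 z.1, zero_add]
        rw [hz, hpsum z.2, map_sum]
        rw [Fin.sum_univ_add (f := fun j : Fin (2*n+t) =>
          ψ (z.2 j • (((0 : L), Pi.single j 1) : L × (Fin (2*n+t) → F))))]
        have hz1 : ∑ i : Fin (2*n), ψ (z.2 (Fin.castAdd t i) •
            (((0 : L), Pi.single (Fin.castAdd t i) 1) : L × (Fin (2*n+t) → F))) = 0 := by
          refine Finset.sum_eq_zero fun i _ => ?_
          rw [map_smul, hker ψ h1 h2 _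
            (Submodule.subset_span (Or.inr ⟨Fin.castAdd t i, i.isLt, rfl⟩)), smul_eq_mul,
            mul_zero]
        rw [hz1, zero_add]
        rw [LinearMap.sum_apply]
        refine Finset.sum_congr rfl fun k _ => ?_
        rw [map_smul, LinearMap.smul_apply]
        show z.2 (Fin.natAdd (2*n) k) *
            ψ ((0 : L), (Pi.single (Fin.natAdd (2*n) k) 1 : Fin (2*n+t) → F))
          = ψ ((0 : L), (Pi.single (⟨2*n + (k : ℕ), by omega⟩ : Fin (2*n+t)) 1 :
              Fin (2*n+t) → F)) * z.2 ⟨2*n + (k : ℕ), by omega⟩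
        rw [mul_comm]
        rfl
      rw [hψ]
      exact Submodule.sum_mem _ fun k _ =>
        Submodule.smul_mem _ _ (Submodule.subset_span ⟨k, rfl⟩)
    · intro hψ
      refine Submodule.span_induction ?_ ?_ ?_ ?_ hψ
      · rintro ψ' ⟨k, rfl⟩
        refine ⟨?_, fun g => rfl, fun x => rfl⟩
        intro x y
        obtain ⟨x1, x2⟩ := x
        obtain ⟨y1, y2⟩ := y
        rw [hBr]
        show (ρ x1 y2 - ρ y1 x2) (⟨2*n + (k : ℕ), by omega⟩ : Fin (2*n+t)) = 0
        rw [Pi.sub_apply, hρ_high _ _ _ (by simp), hρ_high _ _ _ (by simp), sub_zero]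
      · exact ⟨fun _ _ => rfl, fun _ => rfl, fun _ => rfl⟩
      · rintro ψ1 ψ2 - - ⟨h1, h2, h3⟩ ⟨h1', h2', h3'⟩
        exact ⟨fun x y => by rw [LinearMap.add_apply, h1 x y, h1' x y, add_zero],
          fun g => by rw [LinearMap.add_apply, h2 g, h2' g, add_zero],
          fun x => by rw [LinearMap.add_apply, h3 x, h3' x, add_zero]⟩
      · rintro c ψ1 - ⟨h1, h2, h3⟩
        exact ⟨fun x y => by rw [LinearMap.smul_apply, h1 x y, smul_zero],
          fun g => by rw [LinearMap.smul_apply, h2 g, smul_zero],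
          fun x => by rw [LinearMap.smul_apply, h3 x, smul_zero]⟩
  · -- linear independence
    rw [Fintype.linearIndependent_iff]
    intro g hg k
    have h1 : (∑ k' : Fin t, g k' •
        ((LinearMap.proj (R := F) (φ := fun _ : Fin (2*n+t) => F)
            ⟨2*n + (k' : ℕ), by have := k'.isLt; omega⟩).comp
          (LinearMap.snd F L (Fin (2*n+t) → F))))
        ((0 : L), (Pi.single (⟨2*n + (k : ℕ), by have := k.isLt; omega⟩ : Fin (2*n+t)) 1 :
          Fin (2*n+t) → F)) = 0 := by
      rw [hg]; rfl
    simp only [LinearMap.sum_apply, LinearMap.smul_apply, LinearMap.coe_comp,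
      Function.comp_apply, LinearMap.snd_apply, LinearMap.proj_apply, smul_eq_mul] at h1
    rw [Finset.sum_eq_single k (fun k' _ hk => by
        rw [Pi.single_apply, if_neg (fun hcon => hk (by
          have h2 := congrArg Fin.val hcon
          simp only [Fin.val_mk] at h2
          exact Fin.ext (by omega))), mul_zero])
      (fun h => absurd (Finset.mem_univ k) h)] at h1
    rw [Pi.single_apply, if_pos rfl, mul_one] at h1
    exact h1
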